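/- Let d^1, ..., d^m and s^1, ..., s^m be vectors in a real inner product space. Let σ be an operator mapping (d^1,...,d^m) to (d'^1,...,d'^m) such that (i) the mean is invariant: (1/m) Σ d'^i = (1/m) Σ d^i =: d̄, and (ii) (1/m) Σ ‖d'^i − d̄‖² ≤ Δ. Let s'^i = s̄ := (1/m) Σ s^j for all i (full averaging of the s-configuration). Then (1/m) Σ_{i=1}^m ‖d'^i − s'^i‖² ≤ (1/m) Σ_{i=1}^m ‖d^i − s^i‖² + Δ. -/

import Mathlib

/-!
Both sides are governed by the parallel-axis identity
`∑ i, ‖x i - a‖² = ∑ i, ‖x i - x̄‖² + m ‖x̄ - a‖²`, valid for every point `a` because the deviations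
from the mean `x̄` sum to zero. Since `σ` preserves the mean `d̄`, taking `x = d'` and `a = s̄` splits
the left side into the post-synchronization divergence, at most `Δ`, plus `‖d̄ - s̄‖²`; and taking
`x = d - s`, `a = 0` bounds `‖d̄ - s̄‖²` by the mean of `‖d i - s i‖²`.
-/

open Finset

section MeanDeviation

variable {ι E : Type*} [Fintype ι] [NormedAddCommGroup E] [InnerProductSpace ℝ E]

theorem sum_sub_mean_eq_zero (x : ι → E) :
    ∑ i, (x i - (1 / (Fintype.card ι : ℝ)) • ∑ j, x j) = 0 := by
  rw [sum_sub_distrib, sum_const, card_univ, ← Nat.cast_smul_eq_nsmul ℝ, smul_smul, sub_eq_zero]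
  rcases (Fintype.card ι).eq_zero_or_pos with hcard | hcard
  · have : IsEmpty ι := Fintype.card_eq_zero_iff.mp hcard
    simp
  · rw [mul_one_div_cancel (by positivity), one_smul]

theorem sum_norm_sub_sq_eq_sum_norm_sub_mean_sq_add (x : ι → E) (a : E) :
    ∑ i, ‖x i - a‖ ^ 2 =
      ∑ i, ‖x i - (1 / (Fintype.card ι : ℝ)) • ∑ j, x j‖ ^ 2 +
        Fintype.card ι * ‖(1 / (Fintype.card ι : ℝ)) • ∑ j, x j - a‖ ^ 2 := by
  set xbar := (1 / (Fintype.card ι : ℝ)) • ∑ j, x j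
  calc ∑ i, ‖x i - a‖ ^ 2
      = ∑ i, (‖x i - xbar‖ ^ 2 + 2 * inner ℝ (x i - xbar) (xbar - a) + ‖xbar - a‖ ^ 2) := by
        refine sum_congr rfl fun i _ => ?_
        rw [← norm_add_sq_real, sub_add_sub_cancel]
    _ = ∑ i, ‖x i - xbar‖ ^ 2 + 2 * inner ℝ (∑ i, (x i - xbar)) (xbar - a)
          + Fintype.card ι * ‖xbar - a‖ ^ 2 := by
        rw [sum_add_distrib, sum_add_distrib, ← mul_sum, sum_inner, sum_const, card_univ,
          nsmul_eq_mul]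
    _ = _ := by rw [sum_sub_mean_eq_zero, inner_zero_left, mul_zero, add_zero]

theorem card_mul_norm_mean_sq_le (x : ι → E) :
    Fintype.card ι * ‖(1 / (Fintype.card ι : ℝ)) • ∑ j, x j‖ ^ 2 ≤ ∑ i, ‖x i‖ ^ 2 := by
  have h := sum_norm_sub_sq_eq_sum_norm_sub_mean_sq_add x 0
  simp only [sub_zero] at h
  rw [h]
  exact le_add_of_nonneg_left (sum_nonneg fun i _ => sq_nonneg _)

end MeanDeviation

theorem sync_lemma_general
    {E : Type*} [NormedAddCommGroup E] [InnerProductSpace ℝ E]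
    (m : ℕ) (Δ : ℝ)
    (d d' s s' : Fin m → E)
    (hmean : (1 / (m : ℝ)) • ∑ i, d' i = (1 / (m : ℝ)) • ∑ i, d i)
    (hdiv : (1 / (m : ℝ)) * ∑ i, ‖d' i - (1 / (m : ℝ)) • ∑ j, d j‖ ^ 2 ≤ Δ)
    (hs : ∀ i, s' i = (1 / (m : ℝ)) • ∑ j, s j) :
    (1 / (m : ℝ)) * ∑ i, ‖d' i - s' i‖ ^ 2
      ≤ (1 / (m : ℝ)) * ∑ i, ‖d i - s i‖ ^ 2 + Δ := by
  set dbar := (1 / (m : ℝ)) • ∑ j, d j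
  set sbar := (1 / (m : ℝ)) • ∑ j, s j
  have hsplit := sum_norm_sub_sq_eq_sum_norm_sub_mean_sq_add d' sbar
  have hmean_bound := card_mul_norm_mean_sq_le (fun i => d i - s i)
  simp only [Fintype.card_fin, hmean] at hsplit hmean_bound
  rw [sum_sub_distrib, smul_sub] at hmean_bound
  simp only [hs, hsplit]
  calc (1 / (m : ℝ)) * (∑ i, ‖d' i - dbar‖ ^ 2 + m * ‖dbar - sbar‖ ^ 2)
      = (1 / (m : ℝ)) * ∑ i, ‖d' i - dbar‖ ^ 2 + (1 / (m : ℝ)) * (m * ‖dbar - sbar‖ ^ 2) := mul_add ..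
    _ ≤ Δ + (1 / (m : ℝ)) * ∑ i, ‖d i - s i‖ ^ 2 :=
        add_le_add hdiv (mul_le_mul_of_nonneg_left hmean_bound (by positivity))
    _ = _ := add_comm ..

theorem sync_lemma
    {E : Type*} [NormedAddCommGroup E] [InnerProductSpace ℝ E]
    (m : ℕ) (hm : 0 < m) (Δ : ℝ) (hΔ : 0 < Δ)
    (d d' s s' : Fin m → E)
    (hmean : (1 / (m : ℝ)) • ∑ i, d' i = (1 / (m : ℝ)) • ∑ i, d i)
    (hdiv : (1 / (m : ℝ)) * ∑ i, ‖d' i - (1 / (m : ℝ)) • ∑ j, d j‖ ^ 2 ≤ Δ)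
    (hs : ∀ i, s' i = (1 / (m : ℝ)) • ∑ j, s j) :
    (1 / (m : ℝ)) * ∑ i, ‖d' i - s' i‖ ^ 2
      ≤ (1 / (m : ℝ)) * ∑ i, ‖d i - s i‖ ^ 2 + Δ :=
  sync_lemma_general m Δ d d' s s' hmean hdiv hs
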